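/- For every integer k ≥ 1, the group G_k with presentation ⟨x, y | x y x⁻¹ = y⁻¹, x² = y^k⟩ has order 4k. -/

import Mathlib

/-!
The elements `xa 0` and `a 1` of Mathlib's `QuaternionGroup k` satisfy the defining relations, so
the presented group maps onto it. Conversely, in any group with `x y x⁻¹ = y⁻¹` and `x² = yᵏ`,
conjugation by `x` both fixes `yᵏ = x²` and inverts it, so `y²ᵏ = 1`; hence `a i ↦ yⁱ`,
`xa i ↦ x yⁱ` is a well-defined homomorphism out of `QuaternionGroup k`. Applied to the generators
of the presented group, the two maps are mutually inverse, and `QuaternionGroup k` has `4k`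
elements.
-/

/-- The relations of the generalised quaternion group `Q_{4k}`:
`x y x⁻¹ y` and `x² y^{-k}`, where `x = FreeGroup.of 0` and `y = FreeGroup.of 1`. -/
def quaternionRels (k : ℕ) : Set (FreeGroup (Fin 2)) :=
  {FreeGroup.of 0 * FreeGroup.of 1 * (FreeGroup.of 0)⁻¹ * FreeGroup.of 1,
   FreeGroup.of 0 ^ 2 * FreeGroup.of 1 ^ (-(k : ℤ))}

section ConjEqInv

variable {G : Type*} [Group G] {x y : G}

theorem mul_zpow_eq_zpow_neg_mul (h : x * y * x⁻¹ = y⁻¹) (m : ℤ) :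
    x * y ^ m = y ^ (-m) * x := by
  rw [← mul_inv_eq_iff_eq_mul, ← conj_zpow, h, inv_zpow']

theorem zpow_mul_eq_mul_zpow_neg (h : x * y * x⁻¹ = y⁻¹) (m : ℤ) :
    y ^ m * x = x * y ^ (-m) := by
  rw [mul_zpow_eq_zpow_neg_mul h, neg_neg]

theorem pow_two_mul_eq_one_of_sq_eq_pow {n : ℕ} (h : x * y * x⁻¹ = y⁻¹) (hsq : x ^ 2 = y ^ n) :
    y ^ (2 * n) = 1 := by
  have hcomm : x * y ^ (n : ℤ) = y ^ (n : ℤ) * x := by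
    rw [zpow_natCast, ← hsq, ← pow_succ, ← pow_succ']
  have hneg : y ^ (-(n : ℤ)) = y ^ (n : ℤ) :=
    mul_right_cancel ((mul_zpow_eq_zpow_neg_mul h n).symm.trans hcomm)
  rw [two_mul, pow_add]
  nth_rw 1 [← zpow_natCast]
  rw [← hneg, zpow_neg, zpow_natCast, inv_mul_cancel]

end ConjEqInv

theorem zpow_cast_eq_of_pow_eq_one {G : Type*} [Group G] {y : G} {N : ℕ} (hy : y ^ N = 1)
    {i : ZMod N} {m : ℤ} (hm : (m : ZMod N) = i) : y ^ (i.cast : ℤ) = y ^ m := by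
  rw [zpow_eq_zpow_iff_modEq]
  refine Int.ModEq.of_dvd (Int.natCast_dvd_natCast.2 (orderOf_dvd_of_pow_eq_one hy)) ?_
  rw [← ZMod.intCast_eq_intCast_iff, ZMod.intCast_zmod_cast, hm]

namespace QuaternionGroup

variable {n : ℕ}

theorem inv_a (i : ZMod (2 * n)) : (a i)⁻¹ = a (-i) := rfl

theorem a_one_zpow (m : ℤ) : (a 1 : QuaternionGroup n) ^ m = a m := by
  induction m using Int.induction_on with
  | zero => simp
  | succ m ih => rw [zpow_add_one, ih, a_mul_a]; congr 1; push_cast; ring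
  | pred m ih => rw [zpow_sub_one, ih, inv_a, a_mul_a]; congr 1; push_cast; ring

theorem xa_zero_mul_a_one_mul_inv : xa 0 * a 1 * (xa 0)⁻¹ = ((a 1)⁻¹ : QuaternionGroup n) := by
  rw [mul_inv_eq_iff_eq_mul, xa_mul_a, inv_a, a_mul_xa, zero_add, zero_sub, neg_neg]

theorem xa_zero_sq : (xa 0 : QuaternionGroup n) ^ 2 = a 1 ^ n := by
  rw [xa_sq, a_one_pow]

-- `QuaternionGroup 0` is infinite, so both sides are `0`.
theorem nat_card : Nat.card (QuaternionGroup n) = 4 * n := by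
  rcases eq_zero_or_neZero n with rfl | hn
  · rw [Nat.card_congr quaternionGroupZeroEquivDihedralGroupZero.toEquiv, DihedralGroup.nat_card]
    rfl
  · rw [Nat.card_eq_fintype_card, card]

variable {G : Type*} [Group G]

def lift (x y : G) (hconj : x * y * x⁻¹ = y⁻¹) (hsq : x ^ 2 = y ^ n) :
    QuaternionGroup n →* G where
  toFun
    | a i => y ^ (i.cast : ℤ)
    | xa i => x * y ^ (i.cast : ℤ)
  map_one' := by
    change y ^ ((0 : ZMod (2 * n)).cast : ℤ) = 1
    rw [ZMod.cast_zero, zpow_zero]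
  map_mul' := by
    have hy := pow_two_mul_eq_one_of_sq_eq_pow hconj hsq
    rintro (i | i) (j | j) <;> simp only [a_mul_a, a_mul_xa, xa_mul_a, xa_mul_xa]
    · rw [zpow_cast_eq_of_pow_eq_one hy (m := i.cast + j.cast)
        (by push_cast [ZMod.intCast_zmod_cast]; ring), zpow_add]
    · rw [zpow_cast_eq_of_pow_eq_one hy (m := -i.cast + j.cast)
        (by push_cast [ZMod.intCast_zmod_cast]; ring), zpow_add, ← mul_assoc (y ^ _),
        zpow_mul_eq_mul_zpow_neg hconj, mul_assoc]
    · rw [zpow_cast_eq_of_pow_eq_one hy (m := i.cast + j.cast)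
        (by push_cast [ZMod.intCast_zmod_cast]; ring), zpow_add, mul_assoc]
    · rw [zpow_cast_eq_of_pow_eq_one hy (m := n + -i.cast + j.cast)
        (by push_cast [ZMod.intCast_zmod_cast]; ring), zpow_add, zpow_add, mul_assoc x,
        ← mul_assoc (y ^ _), zpow_mul_eq_mul_zpow_neg hconj, ← mul_assoc, ← mul_assoc, ← sq,
        hsq, zpow_natCast]

variable {x y : G}

@[simp]
theorem lift_a (hconj : x * y * x⁻¹ = y⁻¹) (hsq : x ^ 2 = y ^ n) (i : ZMod (2 * n)) :
    lift x y hconj hsq (a i) = y ^ (i.cast : ℤ) := rfl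

@[simp]
theorem lift_xa (hconj : x * y * x⁻¹ = y⁻¹) (hsq : x ^ 2 = y ^ n) (i : ZMod (2 * n)) :
    lift x y hconj hsq (xa i) = x * y ^ (i.cast : ℤ) := rfl

theorem lift_a_one (hconj : x * y * x⁻¹ = y⁻¹) (hsq : x ^ 2 = y ^ n) :
    lift x y hconj hsq (a 1) = y := by
  rw [lift_a, zpow_cast_eq_of_pow_eq_one (pow_two_mul_eq_one_of_sq_eq_pow hconj hsq)
    (m := 1) Int.cast_one, zpow_one]

end QuaternionGroup

open QuaternionGroup

theorem lift_eq_one_of_mem_quaternionRels_iff {G : Type*} [Group G] (k : ℕ) (f : Fin 2 → G) :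
    (∀ r ∈ quaternionRels k, FreeGroup.lift f r = 1) ↔
      f 0 * f 1 * (f 0)⁻¹ = (f 1)⁻¹ ∧ f 0 ^ 2 = f 1 ^ k := by
  simp [quaternionRels, mul_eq_one_iff_eq_inv]

theorem presentedGroup_of_quaternionRels (k : ℕ) :
    let x : PresentedGroup (quaternionRels k) := .of 0
    let y : PresentedGroup (quaternionRels k) := .of 1
    x * y * x⁻¹ = y⁻¹ ∧ x ^ 2 = y ^ k := by
  refine (lift_eq_one_of_mem_quaternionRels_iff k PresentedGroup.of).1 fun r hr => ?_
  have hmk : FreeGroup.lift PresentedGroup.of = PresentedGroup.mk (quaternionRels k) := by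
    ext; rfl
  rw [hmk]
  exact PresentedGroup.one_of_mem hr

noncomputable def presentedQuaternionEquiv (k : ℕ) :
    PresentedGroup (quaternionRels k) ≃* QuaternionGroup k :=
  MonoidHom.toMulEquiv
    (PresentedGroup.toGroup ((lift_eq_one_of_mem_quaternionRels_iff k ![xa 0, a 1]).2
      ⟨xa_zero_mul_a_one_mul_inv, xa_zero_sq⟩))
    (lift _ _ (presentedGroup_of_quaternionRels k).1 (presentedGroup_of_quaternionRels k).2)
    (PresentedGroup.ext fun i => by fin_cases i <;> simp [-lift_a, lift_a_one])
    (MonoidHom.ext fun q => by rcases q with i | i <;> simp [a_one_zpow])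

theorem presented_quaternion_card_general (k : ℕ) :
    Nat.card (PresentedGroup (quaternionRels k)) = 4 * k := by
  rw [Nat.card_congr (presentedQuaternionEquiv k).toEquiv, QuaternionGroup.nat_card]

theorem presented_quaternion_card (k : ℕ) (hk : 1 ≤ k) :
    Nat.card (PresentedGroup (quaternionRels k)) = 4 * k :=
  presented_quaternion_card_general k
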